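/- arXiv:2210.15273 — 5 statements merged into one kernel-verified Lean document; each statement's English description precedes it below -/
import Mathlib

section
/- Loop complementation on any subset preserves the collection of minimum-cardinality feasible sets: for any set system D = (E, F) and A ⊆ E, F_min(D) = F_min(D^{×|A}). -/
open Finset Polynomial

variable {α : Type*} [DecidableEq α]

/-- The twist of a collection of feasible sets with respect to `A`. -/
noncomputable def SS.twist (A : Finset α) (F : Finset (Finset α)) : Finset (Finset α) :=
  F.image (fun X => symmDiff A X)

/-- Loop complementation at a single element `e`. -/
noncomputable def SS.lc (e : α) (F : Finset (Finset α)) : Finset (Finset α) :=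
  symmDiff F ((F.filter (fun X => e ∉ X)).image (insert e))

/-- The two generating operations: twist `*` and loop complementation `×`. -/
inductive SS.Op | star | cross

/-- Apply a single operation at a single element. -/
noncomputable def SS.opElem : SS.Op → α → Finset (Finset α) → Finset (Finset α)
  | .star, e, F => SS.twist {e} F
  | .cross, e, F => SS.lc e F

/-- Apply a word in `{*, ×}` at a single element. -/
noncomputable def SS.wordElem (w : List SS.Op) (e : α) (F : Finset (Finset α)) : Finset (Finset α) :=
  w.foldl (fun F o => SS.opElem o e F) F

/-- Apply a word in `{*, ×}` elementwise on a subset `A`. -/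
noncomputable def SS.wordOn (w : List SS.Op) (A : Finset α) (F : Finset (Finset α)) : Finset (Finset α) :=
  A.toList.foldl (fun F e => SS.wordElem w e F) F

/-- Size of a largest feasible set. -/
noncomputable def SS.rmax (F : Finset (Finset α)) : ℕ := F.sup Finset.card

/-- Size of a smallest feasible set. -/
noncomputable def SS.rmin (F : Finset (Finset α)) : ℕ := sInf (Finset.card '' (F : Set (Finset α)))

/-- The width of a set system. -/
noncomputable def SS.width (F : Finset (Finset α)) : ℕ := SS.rmax F - SS.rmin F

/-- The minimum-cardinality feasible sets. -/
noncomputable def SS.Fmin (F : Finset (Finset α)) : Finset (Finset α) :=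
  F.filter (fun X => X.card = SS.rmin F)

/-- The maximum-cardinality feasible sets. -/
noncomputable def SS.Fmax (F : Finset (Finset α)) : Finset (Finset α) :=
  F.filter (fun X => X.card = SS.rmax F)

/-- The partial-`w` polynomial of a set system with ground set `E`. -/
noncomputable def SS.poly (w : List SS.Op) (E : Finset α) (F : Finset (Finset α)) :
    Polynomial ℤ :=
  ∑ A ∈ E.powerset, (Polynomial.X : Polynomial ℤ) ^ SS.width (SS.wordOn w A F)

/-- A proper set system satisfying the symmetric exchange axiom. -/
noncomputable def SS.IsDeltaMatroid (F : Finset (Finset α)) : Prop :=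
  F.Nonempty ∧ ∀ X ∈ F, ∀ Y ∈ F, ∀ u ∈ symmDiff X Y,
    ∃ v ∈ symmDiff X Y, symmDiff X {u, v} ∈ F

/-- Apply a sequence of single-element twists and loop complementations. -/
noncomputable def SS.seqApply : List (SS.Op × α) → Finset (Finset α) → Finset (Finset α)
  | [], F => F
  | (o, e) :: s, F => SS.seqApply s (SS.opElem o e F)

/-- A set system is vf-safe if every sequence of single-element twists and loop
complementations yields a delta-matroid. -/
noncomputable def SS.VfSafe (F : Finset (Finset α)) : Prop :=
  ∀ s : List (SS.Op × α), SS.IsDeltaMatroid (SS.seqApply s F)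

/-- The direct sum of two set systems. -/
noncomputable def SS.dsum (F F' : Finset (Finset α)) : Finset (Finset α) :=
  (F ×ˢ F').image (fun p => p.1 ∪ p.2)

open SS

/-!
Loop complementation at `e` only adds or removes sets `insert e X` with `e ∉ X ∈ F`, and these
are strictly larger than a smallest feasible set. Hence no set of size at most `rmin F` enters or
leaves, so the smallest feasible sets, and their size, stay the same.
-/

namespace SS

section MinimumSets

variable {β : Type*} {F G : Finset (Finset β)} {X : Finset β}

lemma rmin_le (hX : X ∈ F) : rmin F ≤ X.card :=
  Nat.sInf_le ⟨X, hX, rfl⟩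

lemma exists_mem_card_eq_rmin (hF : F.Nonempty) : ∃ X ∈ F, X.card = rmin F :=
  Nat.sInf_mem (hF.to_set.image Finset.card)

lemma Fmin_eq_of_card_eq_rmin_iff (hF : F.Nonempty) (hG : ∀ X ∈ G, rmin F ≤ X.card)
    (hGF : ∀ X : Finset β, X.card = rmin F → (X ∈ G ↔ X ∈ F)) : Fmin G = Fmin F := by
  obtain ⟨X₀, hX₀F, hX₀c⟩ := exists_mem_card_eq_rmin hF
  have hX₀G : X₀ ∈ G := (hGF X₀ hX₀c).2 hX₀F
  obtain ⟨Y, hYG, hYc⟩ := exists_mem_card_eq_rmin ⟨X₀, hX₀G⟩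
  have hrmin : rmin G = rmin F :=
    le_antisymm (hX₀c ▸ rmin_le hX₀G) (hYc ▸ hG Y hYG)
  ext X
  simp only [Fmin, Finset.mem_filter, hrmin]
  exact ⟨fun ⟨hX, hXc⟩ => ⟨(hGF X hXc).1 hX, hXc⟩, fun ⟨hX, hXc⟩ => ⟨(hGF X hXc).2 hX, hXc⟩⟩

end MinimumSets

section LoopComplementation

variable {F : Finset (Finset α)} {X : Finset α}

lemma rmin_lt_card_of_mem_image_insert {e : α}
    (hX : X ∈ (F.filter (fun Y => e ∉ Y)).image (insert e)) : rmin F < X.card := by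
  obtain ⟨Y, hY, rfl⟩ := Finset.mem_image.1 hX
  rw [Finset.mem_filter] at hY
  rw [Finset.card_insert_of_notMem hY.2]
  exact Nat.lt_succ_of_le (rmin_le hY.1)

lemma rmin_le_card_of_mem_lc {e : α} (hX : X ∈ lc e F) : rmin F ≤ X.card := by
  rcases Finset.mem_symmDiff.1 hX with ⟨hXF, -⟩ | ⟨hXI, -⟩
  · exact rmin_le hXF
  · exact (rmin_lt_card_of_mem_image_insert hXI).le

lemma mem_lc_iff_of_card_le {e : α} (hX : X.card ≤ rmin F) : X ∈ lc e F ↔ X ∈ F := by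
  have hXI : X ∉ (F.filter (fun Y => e ∉ Y)).image (insert e) := fun h =>
    (rmin_lt_card_of_mem_image_insert h).not_ge hX
  simp only [lc, Finset.mem_symmDiff, hXI, not_false_eq_true, and_true, false_and, or_false]

lemma Fmin_lc (e : α) (F : Finset (Finset α)) : Fmin (lc e F) = Fmin F := by
  rcases F.eq_empty_or_nonempty with rfl | hF
  · simp [lc]
  exact Fmin_eq_of_card_eq_rmin_iff hF (fun _ => rmin_le_card_of_mem_lc)
    (fun _ hX => mem_lc_iff_of_card_le hX.le)

lemma Fmin_wordOn_cross (A : Finset α) (F : Finset (Finset α)) :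
    Fmin (wordOn [Op.cross] A F) = Fmin F := by
  rw [wordOn]
  induction A.toList generalizing F with
  | nil => rfl
  | cons e l ih => exact (ih _).trans (Fmin_lc e F)

end LoopComplementation

end SS

theorem stmt4 (F : Finset (Finset α)) (A : Finset α) :
    SS.Fmin F = SS.Fmin (SS.wordOn [SS.Op.cross] A F) :=
  (SS.Fmin_wordOn_cross A F).symm
end

section
/- For any set system D = (E, F) and A ⊆ E, the collection of maximum-cardinality feasible sets of D equals that of D^{*×*|A} and also equals that of D^{×*×|A}. -/
open Finset Polynomial

variable {α : Type*} [DecidableEq α]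

open SS

lemma sd_mem {e : α} {Y : Finset α} (h : e ∈ Y) : symmDiff {e} Y = Y.erase e := by
  ext x
  simp only [Finset.mem_symmDiff, Finset.mem_erase, Finset.mem_singleton]
  constructor
  · rintro (⟨rfl, hx⟩ | ⟨hx, hne⟩)
    · exact absurd h hx
    · exact ⟨hne, hx⟩
  · rintro ⟨hne, hx⟩
    exact Or.inr ⟨hx, hne⟩

lemma sd_not {e : α} {Y : Finset α} (h : e ∉ Y) : symmDiff {e} Y = insert e Y := by
  ext x
  simp only [Finset.mem_symmDiff, Finset.mem_insert, Finset.mem_singleton]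
  constructor
  · rintro (⟨rfl, _⟩ | ⟨hx, hne⟩)
    · exact Or.inl rfl
    · exact Or.inr hx
  · rintro (rfl | hx)
    · exact Or.inl ⟨rfl, h⟩
    · exact Or.inr ⟨hx, fun hxe => h (hxe ▸ hx)⟩

lemma mem_twist_single (e : α) (F : Finset (Finset α)) (Y : Finset α) :
    Y ∈ SS.twist {e} F ↔ symmDiff {e} Y ∈ F := by
  simp only [SS.twist, Finset.mem_image]
  constructor
  · rintro ⟨X, hX, rfl⟩
    rwa [symmDiff_symmDiff_cancel_left]
  · intro h
    exact ⟨_, h, symmDiff_symmDiff_cancel_left _ _⟩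

lemma mem_ins_img (e : α) (F : Finset (Finset α)) (Y : Finset α) :
    Y ∈ (F.filter (fun X => e ∉ X)).image (insert e) ↔ e ∈ Y ∧ Y.erase e ∈ F := by
  simp only [Finset.mem_image, Finset.mem_filter]
  constructor
  · rintro ⟨X, ⟨hXF, heX⟩, rfl⟩
    exact ⟨Finset.mem_insert_self e X, by rwa [Finset.erase_insert heX]⟩
  · rintro ⟨h1, h2⟩
    exact ⟨Y.erase e, ⟨h2, Finset.notMem_erase e Y⟩, Finset.insert_erase h1⟩

lemma mem_lc (e : α) (F : Finset (Finset α)) (Y : Finset α) :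
    Y ∈ SS.lc e F ↔ Xor' (Y ∈ F) (e ∈ Y ∧ Y.erase e ∈ F) := by
  rw [SS.lc]
  rw [Finset.mem_symmDiff]
  rw [mem_ins_img, Xor', Xor]

lemma char_scs (e : α) (F : Finset (Finset α)) (Y : Finset α) :
    Y ∈ SS.wordElem [SS.Op.star, SS.Op.cross, SS.Op.star] e F ↔
      (e ∈ Y ∧ Y ∈ F) ∨ (e ∉ Y ∧ Xor' (Y ∈ F) (insert e Y ∈ F)) := by
  show Y ∈ SS.twist {e} (SS.lc e (SS.twist {e} F)) ↔ _
  rw [mem_twist_single, mem_lc, mem_twist_single, mem_twist_single,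
    symmDiff_symmDiff_cancel_left]
  by_cases he : e ∈ Y
  · rw [sd_mem he]
    simp only [Finset.notMem_erase, false_and, Xor', not_false_eq_true, and_true,
      not_true_eq_false, and_false, or_false, he, true_and, not_and, Xor]
  · rw [sd_not he]
    rw [Finset.erase_insert he, sd_not he]
    simp only [Finset.mem_insert_self, true_and, he, Xor', Xor]
    tauto

lemma char_csc (e : α) (F : Finset (Finset α)) (Y : Finset α) :
    Y ∈ SS.wordElem [SS.Op.cross, SS.Op.star, SS.Op.cross] e F ↔
      (e ∈ Y ∧ Y ∈ F) ∨ (e ∉ Y ∧ Xor' (Y ∈ F) (insert e Y ∈ F)) := by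
  show Y ∈ SS.lc e (SS.twist {e} (SS.lc e F)) ↔ _
  rw [mem_lc, mem_twist_single, mem_lc, mem_twist_single, mem_lc]
  by_cases he : e ∈ Y
  · rw [sd_mem he, sd_not (Finset.notMem_erase e Y), Finset.insert_erase he]
    simp only [Finset.notMem_erase, false_and, he, true_and, Xor', Xor]
    tauto
  · rw [sd_not he, Finset.erase_insert he]
    simp only [sd_not (Finset.notMem_erase e Y), Finset.erase_eq_of_notMem he,
      Finset.mem_insert_self, true_and, he, false_and, and_false, or_false,
      not_false_eq_true, Xor', Xor]
    tauto

lemma Fmax_char (e : α) (F G : Finset (Finset α))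
    (h : ∀ Y, Y ∈ G ↔ (e ∈ Y ∧ Y ∈ F) ∨ (e ∉ Y ∧ Xor' (Y ∈ F) (insert e Y ∈ F))) :
    SS.Fmax G = SS.Fmax F := by
  rcases F.eq_empty_or_nonempty with rfl | hne
  · have hG : G = ∅ := by
      ext Y
      simp only [Finset.notMem_empty, iff_false]
      intro hY
      rcases (h Y).1 hY with ⟨_, hYF⟩ | ⟨_, hx⟩
      · exact Finset.notMem_empty _ hYF
      · rcases hx with ⟨hYF, _⟩ | ⟨hYF, _⟩ <;> exact Finset.notMem_empty _ hYF
    rw [hG]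
  · have hG_le : ∀ Y ∈ G, Y.card ≤ SS.rmax F := by
      intro Y hY
      rcases (h Y).1 hY with ⟨_, hYF⟩ | ⟨_, hx⟩
      · exact Finset.le_sup hYF
      · rcases hx with ⟨hYF, _⟩ | ⟨hYF, _⟩
        · exact Finset.le_sup hYF
        · exact le_trans (Finset.card_le_card (Finset.subset_insert e Y))
            (Finset.le_sup hYF)
    have hmax_mem : ∀ Y ∈ F, Y.card = SS.rmax F → Y ∈ G := by
      intro Y hY hc
      rw [h]
      by_cases he : e ∈ Y
      · exact Or.inl ⟨he, hY⟩
      · refine Or.inr ⟨he, Or.inl ⟨hY, fun hins => ?_⟩⟩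
        have h1 : (insert e Y).card ≤ SS.rmax F := Finset.le_sup hins
        rw [Finset.card_insert_of_notMem he, hc] at h1
        omega
    obtain ⟨Y0, hY0, hY0c⟩ := Finset.exists_mem_eq_sup F hne Finset.card
    have hGrm : SS.rmax G = SS.rmax F := by
      refine le_antisymm (Finset.sup_le hG_le) ?_
      have hY0G : Y0 ∈ G := hmax_mem Y0 hY0 hY0c.symm
      calc SS.rmax F = Y0.card := hY0c
        _ ≤ SS.rmax G := Finset.le_sup hY0G
    ext X
    simp only [SS.Fmax, Finset.mem_filter, hGrm]
    constructor
    · rintro ⟨hXG, hXc⟩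
      refine ⟨?_, hXc⟩
      rcases (h X).1 hXG with ⟨_, hXF⟩ | ⟨he, hx⟩
      · exact hXF
      · rcases hx with ⟨hXF, _⟩ | ⟨hins, _⟩
        · exact hXF
        · exfalso
          have h1 : (insert e X).card ≤ SS.rmax F := Finset.le_sup hins
          rw [Finset.card_insert_of_notMem he, hXc] at h1
          omega
    · rintro ⟨hXF, hXc⟩
      exact ⟨hmax_mem X hXF hXc, hXc⟩

lemma Fmax_foldl (g : α → Finset (Finset α) → Finset (Finset α))
    (hg : ∀ e F, SS.Fmax (g e F) = SS.Fmax F) :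
    ∀ (l : List α) (F : Finset (Finset α)),
      SS.Fmax (l.foldl (fun F e => g e F) F) = SS.Fmax F
  | [], _ => rfl
  | e :: l, F => by
    rw [List.foldl_cons, Fmax_foldl g hg l, hg]

theorem stmt5 (F : Finset (Finset α)) (A : Finset α) :
    SS.Fmax F = SS.Fmax (SS.wordOn [SS.Op.star, SS.Op.cross, SS.Op.star] A F) ∧
    SS.Fmax F = SS.Fmax (SS.wordOn [SS.Op.cross, SS.Op.star, SS.Op.cross] A F) := by
  constructor
  · exact (Fmax_foldl _ (fun e F => Fmax_char e F _ (char_scs e F)) A.toList F).symm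
  · exact (Fmax_foldl _ (fun e F => Fmax_char e F _ (char_csc e F)) A.toList F).symm
end

section
/- If D = (E, F) is a set system and B is a minimum-cardinality feasible set of the dual D^* = D^{*|E}, then D^{×|B} is dual normal, i.e., E is a feasible set of D^{×|B}. -/
open Finset Polynomial

variable {α : Type*} [DecidableEq α]

open SS

/-!
A minimum-size feasible set of the dual has the form `B = E \ X₀` with `X₀ ∈ F` of maximum size,
so `X₀` is inclusion-maximal in `F`. If `Y` is inclusion-maximal in `G` and `e ∉ Y`, then
`insert e Y` is created by loop complementation at `e` and not cancelled (it is not in `G`), and it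
is again inclusion-maximal. Complementing at the elements of `B` one by one thus makes
`X₀ ∪ B = E` feasible.
-/

namespace SS

theorem maximal_sdiff_of_mem_Fmin_twist {E B : Finset α} {F : Finset (Finset α)}
    (hF : ∀ X ∈ F, X ⊆ E) (hB : B ∈ Fmin (twist E F)) :
    B ⊆ E ∧ Maximal (· ∈ F) (E \ B) := by
  obtain ⟨hBtw, hBcard⟩ := mem_filter.1 hB
  obtain ⟨X₀, hX₀, rfl⟩ := mem_image.1 hBtw
  rw [symmDiff_of_ge (hF X₀ hX₀)] at hBcard ⊢
  rw [Finset.sdiff_sdiff_eq_self (hF X₀ hX₀)]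
  refine ⟨sdiff_subset, hX₀, fun X hX hX₀X => ?_⟩
  have hcard : (E \ X₀).card ≤ (E \ X).card := by
    rw [hBcard, ← symmDiff_of_ge (hF X hX)]
    exact Nat.sInf_le ⟨_, mem_image_of_mem _ hX, rfl⟩
  have hcompl : E \ X = E \ X₀ := eq_of_subset_of_card_le (sdiff_subset_sdiff le_rfl hX₀X) hcard
  rw [← Finset.sdiff_sdiff_eq_self (hF X hX), hcompl, Finset.sdiff_sdiff_eq_self (hF X₀ hX₀)]

theorem maximal_insert_lc {e : α} {G : Finset (Finset α)} {Y : Finset α}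
    (hY : Maximal (· ∈ G) Y) (he : e ∉ Y) : Maximal (· ∈ lc e G) (insert e Y) := by
  have hnot : insert e Y ∉ G := fun h => he (hY.2 h (subset_insert e Y) (mem_insert_self e Y))
  refine ⟨mem_symmDiff.2 (Or.inr ⟨mem_image.2 ⟨Y, mem_filter.2 ⟨hY.1, he⟩, rfl⟩, hnot⟩),
    fun X hX hYX => ?_⟩
  have heX : e ∈ X := hYX (mem_insert_self e Y)
  rcases mem_symmDiff.1 hX with ⟨hXG, -⟩ | ⟨hXim, -⟩
  · exact absurd (hY.2 hXG ((subset_insert e Y).trans hYX) heX) he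
  · obtain ⟨Z, hZ, rfl⟩ := mem_image.1 hXim
    obtain ⟨hZG, -⟩ := mem_filter.1 hZ
    have hYZ : Y ⊆ Z := fun a ha =>
      (mem_insert.1 (hYX (mem_insert_of_mem ha))).resolve_left (ne_of_mem_of_not_mem ha he)
    exact insert_subset_insert e (hY.2 hZG hYZ)

theorem maximal_union_foldl_lc {L : List α} (hL : L.Nodup) {G : Finset (Finset α)}
    {Y : Finset α} (hY : Maximal (· ∈ G) Y) (hYL : Disjoint Y L.toFinset) :
    Maximal (· ∈ L.foldl (fun G e => lc e G) G) (Y ∪ L.toFinset) := by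
  induction L generalizing G Y with
  | nil => simpa using hY
  | cons e L ih =>
    rw [List.nodup_cons] at hL
    rw [List.toFinset_cons, disjoint_insert_right] at hYL
    rw [List.foldl_cons, List.toFinset_cons, union_insert, ← insert_union]
    exact ih hL.2 (maximal_insert_lc hY hYL.1)
      (disjoint_insert_left.2 ⟨fun h => hL.1 (List.mem_toFinset.1 h), hYL.2⟩)

theorem maximal_union_wordOn_cross {A Y : Finset α} {G : Finset (Finset α)}
    (hY : Maximal (· ∈ G) Y) (hYA : Disjoint Y A) :
    Maximal (· ∈ wordOn [Op.cross] A G) (Y ∪ A) := by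
  have := maximal_union_foldl_lc (nodup_toList A) hY (by rwa [toList_toFinset])
  rwa [toList_toFinset] at this

end SS

theorem stmt7 (E : Finset α) (F : Finset (Finset α)) (hF : ∀ X ∈ F, X ⊆ E)
    (B : Finset α) (hB : B ∈ SS.Fmin (SS.twist E F)) :
    E ∈ SS.wordOn [SS.Op.cross] B F := by
  obtain ⟨hBE, hmax⟩ := maximal_sdiff_of_mem_Fmin_twist hF hB
  have := (maximal_union_wordOn_cross hmax disjoint_sdiff_self_left).prop
  rwa [sdiff_union_of_subset hBE] at this
end

section
/- Let D be a delta-matroid on ground set E and e ∈ E such that the minimum feasible-set sizes of D and D^{*|e} are equal. Then D and D^{*|e} have the same collection of minimum-cardinality feasible sets. -/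
open Finset Polynomial

variable {α : Type*} [DecidableEq α]

open SS

/-! Let `r` be the common minimum size. Twisting at `e` shrinks every feasible set containing `e`
by one, so no feasible set of size `≤ r` contains `e`, while the twist of a minimum set of the
twisted system is a feasible set of size `r + 1` containing `e`. Given a minimum feasible set `X`,
take such a set `Y` closest to `X`. Symmetric exchange from `Y` towards `X` at some
`u ∈ Y \ (X ∪ {e})` would give either a feasible set that is too small or one of the same kind
closer to `X`; hence `Y = X ∪ {e}`, i.e. `X` is feasible in the twist. The reverse inclusion
follows because twisting is an involution preserving delta-matroids. -/

open scoped symmDiff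

namespace SS

variable {α : Type*} {F : Finset (Finset α)}

lemma rmin_le_card {X : Finset α} (h : X ∈ F) : rmin F ≤ X.card :=
  Nat.sInf_le (Set.mem_image_of_mem _ (mem_coe.2 h))

lemma exists_card_eq_rmin (h : F.Nonempty) : ∃ X ∈ F, X.card = rmin F := by
  obtain ⟨X, hX⟩ := h
  exact Nat.sInf_mem (Set.Nonempty.image _ ⟨X, mem_coe.2 hX⟩)

variable [DecidableEq α]

lemma singleton_symmDiff_of_mem {e : α} {X : Finset α} (h : e ∈ X) : {e} ∆ X = X.erase e := by
  rw [symmDiff_of_le (singleton_subset_iff.2 h), sdiff_singleton_eq_erase]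

lemma singleton_symmDiff_of_notMem {e : α} {X : Finset α} (h : e ∉ X) :
    {e} ∆ X = insert e X := by
  ext a
  by_cases hae : a = e <;> simp_all [mem_symmDiff]

lemma mem_twist {A X : Finset α} : X ∈ twist A F ↔ A ∆ X ∈ F := by
  refine ⟨fun h => ?_, fun h => mem_image.2 ⟨_, h, symmDiff_symmDiff_cancel_left A X⟩⟩
  obtain ⟨Y, hY, rfl⟩ := mem_image.1 h
  rwa [symmDiff_symmDiff_cancel_left]

lemma twist_twist (A : Finset α) (F : Finset (Finset α)) : twist A (twist A F) = F := by
  ext X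
  rw [mem_twist, mem_twist, symmDiff_symmDiff_cancel_left]

lemma rmin_twist_symm {A : Finset α} (h : rmin F = rmin (twist A F)) :
    rmin (twist A F) = rmin (twist A (twist A F)) := by
  rw [twist_twist, h]

lemma IsDeltaMatroid.twist (hD : IsDeltaMatroid F) (A : Finset α) :
    IsDeltaMatroid (SS.twist A F) := by
  refine ⟨hD.1.image _, fun X hX Y hY u hu => ?_⟩
  rw [mem_twist] at hX hY
  have hdist : (A ∆ X) ∆ (A ∆ Y) = X ∆ Y := by
    rw [symmDiff_symmDiff_symmDiff_comm, symmDiff_self, bot_symmDiff]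
  obtain ⟨v, hv, hXv⟩ := hD.2 _ hX _ hY u (hdist ▸ hu)
  exact ⟨v, hdist ▸ hv, mem_twist.2 (symmDiff_assoc A X {u, v} ▸ hXv)⟩

lemma IsDeltaMatroid.exists_closer (hD : IsDeltaMatroid F) {r : ℕ} {e : α}
    (hmin : ∀ Z ∈ F, r ≤ Z.card) (hbig : ∀ Z ∈ F, e ∈ Z → r < Z.card)
    {X Y : Finset α} (hX : X ∈ F) (hY : Y ∈ F) (heY : e ∈ Y) (hYc : Y.card = r + 1)
    {u : α} (huY : u ∈ Y) (huX : u ∉ insert e X) :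
    ∃ Y' ∈ F, e ∈ Y' ∧ Y'.card = r + 1 ∧ (X ∆ Y').card < (X ∆ Y).card := by
  obtain ⟨hue, huX⟩ := not_or.1 (mem_insert.not.1 huX)
  obtain ⟨v, hv, hZ⟩ := hD.2 Y hY X hX u (mem_symmDiff.2 (Or.inl ⟨huY, huX⟩))
  by_cases hvY : v ∈ Y
  · exfalso
    have hsub : Y ∆ {u, v} ⊆ Y.erase u := by
      rw [symmDiff_of_ge (insert_subset huY (singleton_subset_iff.2 hvY))]
      exact sdiff_subset_sdiff subset_rfl (singleton_subset_iff.2 (mem_insert_self u _))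
        |>.trans (sdiff_singleton_eq_erase u Y).le
    have heYu : e ∈ Y.erase u := mem_erase.2 ⟨Ne.symm hue, heY⟩
    have hYu : (Y.erase u).card + 1 = Y.card := card_erase_add_one huY
    have hYue : ((Y.erase u).erase e).card + 1 = (Y.erase u).card := card_erase_add_one heYu
    have heZ : e ∉ Y ∆ {u, v} := fun he =>
      (hbig _ hZ he).not_ge ((card_le_card hsub).trans (by omega))
    have hsub' : Y ∆ {u, v} ⊆ (Y.erase u).erase e := fun a ha =>
      mem_erase.2 ⟨fun hae => heZ (hae ▸ ha), hsub ha⟩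
    have := (hmin _ hZ).trans (card_le_card hsub')
    omega
  · have hvX : v ∈ X := by simpa [mem_symmDiff, hvY] using hv
    have hvu : v ≠ u := fun h => hvY (h ▸ huY)
    have hve : v ≠ e := fun h => hvY (h ▸ heY)
    have hZeq : Y ∆ {u, v} = insert v (Y.erase u) := by
      ext a
      by_cases hau : a = u <;> by_cases hav : a = v <;> simp_all [mem_symmDiff]
    refine ⟨_, hZ, ?_, ?_, ?_⟩
    · rw [hZeq]
      exact mem_insert_of_mem (mem_erase.2 ⟨Ne.symm hue, heY⟩)
    · rw [hZeq, card_insert_of_notMem (fun h => hvY (mem_of_mem_erase h)),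
        card_erase_of_mem huY, hYc]
      omega
    · have huv : {u, v} ⊆ X ∆ Y := insert_subset (mem_symmDiff.2 (Or.inr ⟨huY, huX⟩))
        (singleton_subset_iff.2 (mem_symmDiff.2 (Or.inl ⟨hvX, hvY⟩)))
      rw [← symmDiff_assoc, symmDiff_of_ge huv]
      exact card_lt_card (sdiff_ssubset huv (insert_nonempty u {v}))

lemma IsDeltaMatroid.insert_mem (hD : IsDeltaMatroid F) {r : ℕ} {e : α}
    (hmin : ∀ Z ∈ F, r ≤ Z.card) (hbig : ∀ Z ∈ F, e ∈ Z → r < Z.card)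
    (hY : ∃ Y ∈ F, e ∈ Y ∧ Y.card = r + 1) {X : Finset α} (hX : X ∈ F) (hXc : X.card = r) :
    insert e X ∈ F := by
  obtain ⟨Y, hYS, hYmin⟩ := exists_min_image (F.filter fun Y => e ∈ Y ∧ Y.card = r + 1)
    (fun Y => (X ∆ Y).card) (by simpa only [Finset.Nonempty, mem_filter] using hY)
  obtain ⟨hYF, heY, hYc⟩ := mem_filter.1 hYS
  have hsub : Y ⊆ insert e X := fun u huY => by
    by_contra huX
    obtain ⟨Y', hY'F, heY', hY'c, hlt⟩ := hD.exists_closer hmin hbig hX hYF heY hYc huY huX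
    exact (hYmin Y' (mem_filter.2 ⟨hY'F, heY', hY'c⟩)).not_gt hlt
  have heX : e ∉ X := fun he => (hbig X hX he).ne' hXc
  rwa [← eq_of_subset_of_card_le hsub (by rw [card_insert_of_notMem heX, hXc, hYc])]

variable {e : α}

lemma rmin_lt_card_of_mem (h : rmin F = rmin (twist {e} F)) {Z : Finset α} (hZ : Z ∈ F)
    (he : e ∈ Z) : rmin F < Z.card := by
  have hle := rmin_le_card (mem_twist.2 ((symmDiff_symmDiff_cancel_left {e} Z).symm ▸ hZ))
  rw [← h, singleton_symmDiff_of_mem he, card_erase_of_mem he] at hle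
  have := card_pos.2 ⟨e, he⟩
  omega

lemma exists_mem_card_eq_rmin_add_one (hne : F.Nonempty) (h : rmin F = rmin (twist {e} F)) :
    ∃ Y ∈ F, e ∈ Y ∧ Y.card = rmin F + 1 := by
  obtain ⟨W, hW, hWc⟩ := exists_card_eq_rmin (F := twist {e} F) (hne.image _)
  have heW : e ∉ W := fun he => (rmin_lt_card_of_mem (rmin_twist_symm h) hW he).ne' hWc
  refine ⟨insert e W, ?_, mem_insert_self e W, ?_⟩
  · rw [← singleton_symmDiff_of_notMem heW]
    exact mem_twist.1 hW
  · rw [card_insert_of_notMem heW, hWc, h]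

lemma Fmin_subset_Fmin_twist (hD : IsDeltaMatroid F) (h : rmin F = rmin (twist {e} F)) :
    Fmin F ⊆ Fmin (twist {e} F) := by
  intro X hX
  obtain ⟨hXF, hXc⟩ := mem_filter.1 hX
  have heX : e ∉ X := fun he => (rmin_lt_card_of_mem h hXF he).ne' hXc
  have hins := hD.insert_mem (fun _ => rmin_le_card) (fun _ => rmin_lt_card_of_mem h)
    (exists_mem_card_eq_rmin_add_one hD.1 h) hXF hXc
  refine mem_filter.2 ⟨mem_twist.2 ?_, hXc.trans h⟩
  rwa [singleton_symmDiff_of_notMem heX]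

end SS

theorem stmt9 (F : Finset (Finset α)) (hD : SS.IsDeltaMatroid F) (e : α)
    (h : SS.rmin F = SS.rmin (SS.twist {e} F)) :
    SS.Fmin F = SS.Fmin (SS.twist {e} F) := by
  refine (Fmin_subset_Fmin_twist hD h).antisymm ?_
  simpa only [twist_twist] using Fmin_subset_Fmin_twist (hD.twist {e}) (rmin_twist_symm h)
end

section
/- Let D = (E, F) be a delta-matroid and e ∈ E with dual type t (every maximum feasible set contains e and some feasible set of size r(D_max)−1 omits e). Then r((D^{×|e})_max) = r(D_max) − 1 and e has dual type p in D^{×|e} (some maximum feasible set of D^{×|e} omits e). -/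
open Finset Polynomial

variable {α : Type*} [DecidableEq α]

open SS

/-!
Write `r` for the maximum size of a feasible set. No set of size `r` survives loop
complementation at `e`. A maximum feasible set `X` contains `e`, and `X - e` is feasible: exchange
a feasible set of size `r - 1` avoiding `e` towards `X`, one element at a time, until it equals
`X - e`. A feasible set `Y` of size `r - 1` avoiding `e` lies in a maximum feasible set, which must
be `Y + e`. So both kinds of size-`r` sets cancel, while the feasible sets of size `r - 1` avoiding
`e` survive and are now maximum.
-/

namespace SS

variable {F : Finset (Finset α)} {B X Y : Finset α} {e u : α}

lemma mem_lc_iff : X ∈ lc e F ↔ Xor (X ∈ F) (e ∈ X ∧ X.erase e ∈ F) := by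
  have hinsert : X ∈ (F.filter (e ∉ ·)).image (insert e) ↔ e ∈ X ∧ X.erase e ∈ F := by
    rw [mem_image]
    constructor
    · rintro ⟨Y, hY, rfl⟩
      obtain ⟨hYF, heY⟩ := mem_filter.1 hY
      exact ⟨mem_insert_self e Y, by rwa [erase_insert heY]⟩
    · rintro ⟨heX, hXF⟩
      exact ⟨X.erase e, by simp [hXF], insert_erase heX⟩
  rw [lc, mem_symmDiff, hinsert]
  rfl

lemma mem_lc_of_notMem (hB : B ∈ F) (heB : e ∉ B) : B ∈ lc e F :=
  mem_lc_iff.2 (Or.inl ⟨hB, fun h => heB h.1⟩)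

lemma IsDeltaMatroid.exists_insert_erase_mem (hD : IsDeltaMatroid F) (hB : B ∈ F) (hY : Y ∈ F)
    (huY : u ∈ Y) (huB : u ∉ B) (hins : insert u B ∉ F) (hcard : rmax F ≤ B.card + 1) :
    ∃ v ∈ B, v ∉ Y ∧ insert u (B.erase v) ∈ F := by
  obtain ⟨v, hv, hexch⟩ := hD.2 B hB Y hY u (mem_symmDiff.2 (Or.inr ⟨huY, huB⟩))
  obtain rfl | hvu := eq_or_ne v u
  · refine absurd ?_ hins
    convert hexch using 1
    ext a; simp only [mem_insert, mem_symmDiff, mem_singleton]; grind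
  rcases mem_symmDiff.1 hv with ⟨hvB, hvY⟩ | ⟨hvY, hvB⟩
  · refine ⟨v, hvB, hvY, ?_⟩
    convert hexch using 1
    ext a; simp only [mem_insert, mem_erase, mem_symmDiff, mem_singleton]; grind
  · have hsd : symmDiff B {u, v} = insert u (insert v B) := by
      ext a; simp only [mem_insert, mem_symmDiff, mem_singleton]; grind
    have : _ ≤ rmax F := le_sup hexch
    rw [hsd, card_insert_of_notMem (by simp [hvu.symm, huB]), card_insert_of_notMem hvB] at this
    omega

lemma sdiff_insert_erase_ssubset (huY : u ∈ Y) (huB : u ∉ B) {v : α} (hvY : v ∉ Y) :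
    Y \ insert u (B.erase v) ⊂ Y \ B := by
  have hsub : Y \ insert u (B.erase v) ⊆ Y \ B := fun a ha => by
    simp only [mem_sdiff, mem_insert, mem_erase, not_or, not_and] at ha ⊢
    exact ⟨ha.1, fun haB => ha.2.2 (fun hav => hvY (hav ▸ ha.1)) haB⟩
  exact (ssubset_iff_of_subset hsub).2 ⟨u, mem_sdiff.2 ⟨huY, huB⟩, by simp⟩

/-- Upper half of the sandwich lemma. -/
lemma IsDeltaMatroid.exists_mem_Fmax_superset (hD : IsDeltaMatroid F) (hY : Y ∈ F) :
    ∃ M ∈ Fmax F, Y ⊆ M := by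
  obtain ⟨M₀, hM₀, hM₀r⟩ := exists_mem_eq_sup F hD.1 card
  obtain ⟨M, hM, hmin⟩ := exists_min_image (Fmax F) (fun M => (Y \ M).card)
    ⟨M₀, mem_filter.2 ⟨hM₀, hM₀r.symm⟩⟩
  obtain ⟨hMF, hMr⟩ := mem_filter.1 hM
  refine ⟨M, hM, fun u huY => by_contra fun huM => ?_⟩
  have hins : insert u M ∉ F := fun h => by
    have : _ ≤ rmax F := le_sup h
    rw [card_insert_of_notMem huM] at this
    omega
  obtain ⟨v, hvM, hvY, hM'⟩ := hD.exists_insert_erase_mem hMF hY huY huM hins (by omega)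
  have hM'r : (insert u (M.erase v)).card = rmax F := by
    rw [card_insert_of_notMem (by simp [huM]), card_erase_of_mem hvM, ← hMr]
    have := card_pos.2 ⟨v, hvM⟩
    omega
  exact (hmin _ (mem_filter.2 ⟨hM', hM'r⟩)).not_gt
    (card_lt_card (sdiff_insert_erase_ssubset huY huM hvY))

lemma IsDeltaMatroid.insert_mem_of_card_add_one_eq_rmax (hD : IsDeltaMatroid F)
    (he : ∀ A ∈ Fmax F, e ∈ A) (hY : Y ∈ F) (hYr : Y.card + 1 = rmax F) (heY : e ∉ Y) :
    insert e Y ∈ F := by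
  obtain ⟨M, hM, hYM⟩ := hD.exists_mem_Fmax_superset hY
  obtain ⟨hMF, hMr⟩ := mem_filter.1 hM
  have hsub : insert e Y ⊆ M := insert_subset (he M hM) hYM
  rwa [eq_of_subset_of_card_le hsub (by rw [card_insert_of_notMem heY]; omega)]

lemma IsDeltaMatroid.erase_mem_of_mem_Fmax (hD : IsDeltaMatroid F) (he : ∀ A ∈ Fmax F, e ∈ A)
    (hB : ∃ B ∈ F, B.card + 1 = rmax F ∧ e ∉ B) (hX : X ∈ Fmax F) : X.erase e ∈ F := by
  obtain ⟨hXF, hXr⟩ := mem_filter.1 hX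
  obtain ⟨B, hBS, hmin⟩ := exists_min_image (F.filter fun B => B.card + 1 = rmax F ∧ e ∉ B)
    (fun B => (X \ B).card) (by simpa only [Finset.Nonempty, mem_filter, and_assoc] using hB)
  obtain ⟨hBF, hBr, heB⟩ := mem_filter.1 hBS
  have hsub : X ⊆ insert e B := fun u huX => by
    by_contra hu
    obtain ⟨hue, huB⟩ : u ≠ e ∧ u ∉ B := by simpa only [mem_insert, not_or] using hu
    have hins : insert u B ∉ F := fun h => by
      have hmax : insert u B ∈ Fmax F :=
        mem_filter.2 ⟨h, by rw [card_insert_of_notMem huB]; omega⟩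
      simpa [hue.symm, heB] using he _ hmax
    obtain ⟨v, hvB, hvX, hB'⟩ := hD.exists_insert_erase_mem hBF hXF huX huB hins (by omega)
    have hB'S : insert u (B.erase v) ∈ F.filter fun B => B.card + 1 = rmax F ∧ e ∉ B := by
      refine mem_filter.2 ⟨hB', ?_, by simp [hue.symm, heB]⟩
      rw [card_insert_of_notMem (by simp [huB]), card_erase_of_mem hvB, ← hBr]
      have := card_pos.2 ⟨v, hvB⟩
      omega
    exact (hmin _ hB'S).not_gt (card_lt_card (sdiff_insert_erase_ssubset huX huB hvX))
  rwa [eq_of_subset_of_card_le hsub (by rw [card_insert_of_notMem heB]; omega), erase_insert heB]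

lemma IsDeltaMatroid.card_add_one_le_rmax_of_mem_lc (hD : IsDeltaMatroid F)
    (he : ∀ A ∈ Fmax F, e ∈ A) (hB : ∃ B ∈ F, B.card + 1 = rmax F ∧ e ∉ B)
    (hX : X ∈ lc e F) : X.card + 1 ≤ rmax F := by
  rcases mem_lc_iff.1 hX with ⟨hXF, hXnot⟩ | ⟨⟨heX, hXe⟩, hXnF⟩
  · have hXr : X.card ≤ rmax F := le_sup hXF
    have hXr' : X.card ≠ rmax F := fun h =>
      have hXmax : X ∈ Fmax F := mem_filter.2 ⟨hXF, h⟩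
      hXnot ⟨he X hXmax, hD.erase_mem_of_mem_Fmax he hB hXmax⟩
    omega
  · have hYr : (X.erase e).card ≤ rmax F := le_sup hXe
    have hYr' : (X.erase e).card ≠ rmax F := fun h =>
      notMem_erase e X (he _ (mem_filter.2 ⟨hXe, h⟩))
    have hYr'' : (X.erase e).card + 1 ≠ rmax F := fun h => hXnF <| by
      simpa [insert_erase heX] using
        hD.insert_mem_of_card_add_one_eq_rmax he hXe h (notMem_erase e X)
    have := card_erase_add_one heX
    omega

end SS

theorem stmt14 (F : Finset (Finset α)) (hD : SS.IsDeltaMatroid F) (e : α)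
    (ht1 : ∀ A ∈ SS.Fmax F, e ∈ A)
    (ht2 : ∃ B ∈ F, B.card + 1 = SS.rmax F ∧ e ∉ B) :
    SS.rmax (SS.lc e F) + 1 = SS.rmax F ∧
    ∃ B ∈ SS.Fmax (SS.lc e F), e ∉ B := by
  have hle : rmax (lc e F) ≤ rmax F - 1 := Finset.sup_le fun X hX => by
    have := hD.card_add_one_le_rmax_of_mem_lc ht1 ht2 hX
    omega
  obtain ⟨B, hBF, hBr, heB⟩ := ht2
  have hBlc : B ∈ lc e F := mem_lc_of_notMem hBF heB
  have hge : B.card ≤ rmax (lc e F) := le_sup hBlc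
  exact ⟨by omega, B, mem_filter.2 ⟨hBlc, by omega⟩, heB⟩
end
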